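/- arXiv:1011.1820 — 6 statements merged into one kernel-verified Lean document; each statement's English description precedes it below -/
import Mathlib

section
/- Let A and B be unital K-algebras, with A associative and B associative and commutative, and let R : B⊗A → A⊗B be an alternative twisting map (with respect to a fixed decomposition A = K·1_A ⊕ A₀). Then the multiplication of the alternative twisted tensor product A⊗̄_R B is given on all tensor monomials by (a⊗b)(a'⊗b') = a a'_R ⊗ b_R b', and A⊗̄_R B is an associative algebra. -/
/-!
Write `a ∈ A` as `k • 1 + a₀` with `a₀ ∈ A₀`. As `B` is commutative, the two defining formulas
of the product (for `a = 1` and for `a ∈ A₀`) are both instances of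
`(a ⊗ b) ⋆ (a' ⊗ b') = a a'_R ⊗ b_R b'`, and likewise the twisting condition for products in `B`,
imposed only on `A₀`, holds on all of `A`. So the product is the ordinary twisted tensor product
`⋆`, and the two twisting conditions together with associativity of `A` and `B` reduce both
bracketings of `(a ⊗ b) ⋆ (a' ⊗ b') ⋆ (a'' ⊗ b'')` to `a · (R(b ⊗ a') ⋆ R(b' ⊗ a'')) · b''`.
-/

open TensorProduct LinearMap

section TwistPreamble

variable (K : Type*) [Field K]
variable (A : Type*) [NonAssocRing A] [Module K A] [SMulCommClass K A A] [IsScalarTower K A A]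
variable (B : Type*) [NonAssocRing B] [Module K B] [SMulCommClass K B B] [IsScalarTower K B B]

/-- Sweedler helper: sends `Σ aR ⊗ bR` in `A ⊗ B` to `Σ (aR * a'_r) ⊗ (bR)_r`,
where `R((bR) ⊗ a') = a'_r ⊗ (bR)_r`. -/
noncomputable def attpRmul (R : B ⊗[K] A →ₗ[K] A ⊗[K] B) (a' : A) :
    A ⊗[K] B →ₗ[K] A ⊗[K] B :=
  (rTensor B (LinearMap.mul' K A)) ∘ₗ (TensorProduct.assoc K A A B).symm.toLinearMap ∘ₗ
    (lTensor A (R ∘ₗ (TensorProduct.mk K B A).flip a'))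

/-- Sweedler helper: sends `Σ aR ⊗ b'R` in `A ⊗ B` to `Σ (aR)_r ⊗ (b'R * b_r)`,
where `R(b ⊗ aR) = (aR)_r ⊗ b_r`. -/
noncomputable def attpLmul (R : B ⊗[K] A →ₗ[K] A ⊗[K] B) (b : B) :
    A ⊗[K] B →ₗ[K] A ⊗[K] B :=
  (lTensor A ((LinearMap.mul' K B) ∘ₗ (TensorProduct.comm K B B).toLinearMap)) ∘ₗ
    (TensorProduct.assoc K A B B).toLinearMap ∘ₗ
    (rTensor B (R ∘ₗ (TensorProduct.mk K B A) b))

/-- `R : B ⊗ A → A ⊗ B` is an alternative twisting map w.r.t. the decomposition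
`A = K·1_A ⊕ A₀`. -/
def IsAltTwistingMap (A₀ : Submodule K A) (R : B ⊗[K] A →ₗ[K] A ⊗[K] B) : Prop :=
  (∀ a : A, R ((1 : B) ⊗ₜ[K] a) = a ⊗ₜ[K] (1 : B)) ∧
  (∀ b : B, R (b ⊗ₜ[K] (1 : A)) = (1 : A) ⊗ₜ[K] b) ∧
  (∀ (a a' : A) (b : B), R (b ⊗ₜ[K] (a * a')) = attpRmul K A B R a' (R (b ⊗ₜ[K] a))) ∧
  (∀ a ∈ A₀, ∀ b b' : B, R ((b * b') ⊗ₜ[K] a) = attpLmul K A B R b (R (b' ⊗ₜ[K] a)))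

/-- `m` is the multiplication of the alternative twisted tensor product `A ⊗̄_R B`:
`(1⊗b)(a'⊗b') = a'_R ⊗ b_R b'` and, for `a ∈ A₀`, `(a⊗b)(a'⊗b') = a a'_R ⊗ b' b_R`. -/
def IsAltMul (A₀ : Submodule K A) (R : B ⊗[K] A →ₗ[K] A ⊗[K] B)
    (m : A ⊗[K] B →ₗ[K] A ⊗[K] B →ₗ[K] A ⊗[K] B) : Prop :=
  (∀ (b : B) (a' : A) (b' : B),
      m ((1 : A) ⊗ₜ[K] b) (a' ⊗ₜ[K] b') = (lTensor A (mulRight K b')) (R (b ⊗ₜ[K] a'))) ∧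
  (∀ a ∈ A₀, ∀ (b : B) (a' : A) (b' : B),
      m (a ⊗ₜ[K] b) (a' ⊗ₜ[K] b') =
        (TensorProduct.map (mulLeft K a) (mulLeft K b')) (R (b ⊗ₜ[K] a')))

end TwistPreamble

theorem LinearMap.ext_of_codisjoint_span_singleton {K M N : Type*} [Semiring K]
    [AddCommMonoid M] [Module K M] [AddCommMonoid N] [Module K N] {x : M} {M₀ : Submodule K M}
    (hM₀ : Codisjoint (Submodule.span K {x}) M₀) {f g : M →ₗ[K] N} (hx : f x = g x)
    (h₀ : ∀ y ∈ M₀, f y = g y) : f = g :=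
  ext_on_codisjoint hM₀ (eqOn_span' (Set.eqOn_singleton.mpr hx)) h₀

section TwistedTensorProduct

variable {K : Type*} [Field K] {A : Type*} [NonAssocRing A] [Module K A]
  {B : Type*} [NonAssocRing B] [Module K B]

theorem attpLmul_tmul [SMulCommClass K B B] [IsScalarTower K B B]
    (R : B ⊗[K] A →ₗ[K] A ⊗[K] B) (b : B) (p : A) (q : B) :
    attpLmul K A B R b (p ⊗ₜ[K] q) = lTensor A (mulLeft K q) (R (b ⊗ₜ[K] p)) := by
  simp only [attpLmul, LinearMap.comp_apply, rTensor_tmul, mk_apply, LinearEquiv.coe_coe]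
  induction R (b ⊗ₜ[K] p) using TensorProduct.induction_on with
  | zero => simp
  | tmul s t => simp [mul'_apply]
  | add u v hu hv => simp only [add_tmul, map_add, hu, hv]

theorem attpRmul_tmul [SMulCommClass K A A] [IsScalarTower K A A]
    (R : B ⊗[K] A →ₗ[K] A ⊗[K] B) (a' x : A) (y : B) :
    attpRmul K A B R a' (x ⊗ₜ[K] y) = rTensor B (mulLeft K x) (R (y ⊗ₜ[K] a')) := by
  simp only [attpRmul, LinearMap.comp_apply, lTensor_tmul, mk_apply, flip_apply,
    LinearEquiv.coe_coe]
  induction R (y ⊗ₜ[K] a') using TensorProduct.induction_on with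
  | zero => simp
  | tmul s t => simp [mul'_apply]
  | add u v hu hv => simp only [tmul_add, map_add, hu, hv]

variable [SMulCommClass K A A] [IsScalarTower K A A] [SMulCommClass K B B] [IsScalarTower K B B]

noncomputable def twistedMul (R : B ⊗[K] A →ₗ[K] A ⊗[K] B) :
    A ⊗[K] B →ₗ[K] A ⊗[K] B →ₗ[K] A ⊗[K] B :=
  TensorProduct.curry <|
    rTensor B (mul' K A) ∘ₗ (TensorProduct.assoc K A A B).symm.toLinearMap ∘ₗ
    lTensor A (lTensor A (mul' K B) ∘ₗ (TensorProduct.assoc K A B B).toLinearMap) ∘ₗ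
    lTensor A (rTensor B R) ∘ₗ lTensor A (TensorProduct.assoc K B A B).symm.toLinearMap ∘ₗ
    (TensorProduct.assoc K A B (A ⊗[K] B)).toLinearMap

theorem twistedMul_tmul (R : B ⊗[K] A →ₗ[K] A ⊗[K] B) (x : A) (y : B) (p : A) (q : B) :
    twistedMul R (x ⊗ₜ[K] y) (p ⊗ₜ[K] q) =
      TensorProduct.map (mulLeft K x) (mulRight K q) (R (y ⊗ₜ[K] p)) := by
  simp only [twistedMul, curry_apply, LinearMap.comp_apply, LinearEquiv.coe_coe, assoc_tmul,
    lTensor_tmul, assoc_symm_tmul, rTensor_tmul]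
  induction R (y ⊗ₜ[K] p) using TensorProduct.induction_on with
  | zero => simp
  | tmul s t => simp [mul'_apply]
  | add u v hu hv => simp only [add_tmul, map_add, tmul_add, hu, hv]

variable {R : B ⊗[K] A →ₗ[K] A ⊗[K] B}

theorem twistedMul_map_tmul (hAassoc : ∀ x y z : A, x * y * z = x * (y * z))
    (hBcomm : ∀ x y : B, x * y = y * x)
    (hleft : ∀ (a : A) (b b' : B), R ((b * b') ⊗ₜ[K] a) = attpLmul K A B R b (R (b' ⊗ₜ[K] a)))
    (a : A) (b' : B) (a'' : A) (b'' : B) (u : A ⊗[K] B) :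
    twistedMul R (TensorProduct.map (mulLeft K a) (mulRight K b') u) (a'' ⊗ₜ[K] b'') =
      TensorProduct.map (mulLeft K a) (mulRight K b'') (twistedMul R u (R (b' ⊗ₜ[K] a''))) := by
  induction u using TensorProduct.induction_on with
  | zero => simp
  | add u v hu hv => simp only [map_add, LinearMap.add_apply, hu, hv]
  | tmul x y =>
    rw [map_tmul, mulLeft_apply, mulRight_apply, twistedMul_tmul, hleft]
    induction R (b' ⊗ₜ[K] a'') using TensorProduct.induction_on with
    | zero => simp
    | add v w hv hw => simp only [map_add, hv, hw]
    | tmul p q =>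
      rw [attpLmul_tmul, twistedMul_tmul]
      induction R (y ⊗ₜ[K] p) using TensorProduct.induction_on with
      | zero => simp
      | add w w' hw hw' => simp only [map_add, hw, hw']
      | tmul s t => simp only [lTensor_tmul, map_tmul, mulLeft_apply, mulRight_apply,
          hAassoc a x s, hBcomm q t]

theorem twistedMul_tmul_map (hBassoc : ∀ x y z : B, x * y * z = x * (y * z))
    (hright : ∀ (a a' : A) (b : B), R (b ⊗ₜ[K] (a * a')) = attpRmul K A B R a' (R (b ⊗ₜ[K] a)))
    (a : A) (b : B) (a' : A) (b'' : B) (v : A ⊗[K] B) :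
    twistedMul R (a ⊗ₜ[K] b) (TensorProduct.map (mulLeft K a') (mulRight K b'') v) =
      TensorProduct.map (mulLeft K a) (mulRight K b'') (twistedMul R (R (b ⊗ₜ[K] a')) v) := by
  induction v using TensorProduct.induction_on with
  | zero => simp
  | add v w hv hw => simp only [map_add, hv, hw]
  | tmul p q =>
    rw [map_tmul, mulLeft_apply, mulRight_apply, twistedMul_tmul, hright]
    induction R (b ⊗ₜ[K] a') using TensorProduct.induction_on with
    | zero => simp
    | add u w hu hw => simp only [map_add, LinearMap.add_apply, hu, hw]
    | tmul x y =>
      rw [attpRmul_tmul, twistedMul_tmul]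
      induction R (y ⊗ₜ[K] p) using TensorProduct.induction_on with
      | zero => simp
      | add w w' hw hw' => simp only [map_add, hw, hw']
      | tmul s t => simp only [rTensor_tmul, map_tmul, mulLeft_apply, mulRight_apply,
          hBassoc t q b'']

theorem twistedMul_assoc (hAassoc : ∀ x y z : A, x * y * z = x * (y * z))
    (hBassoc : ∀ x y z : B, x * y * z = x * (y * z)) (hBcomm : ∀ x y : B, x * y = y * x)
    (hright : ∀ (a a' : A) (b : B), R (b ⊗ₜ[K] (a * a')) = attpRmul K A B R a' (R (b ⊗ₜ[K] a)))
    (hleft : ∀ (a : A) (b b' : B), R ((b * b') ⊗ₜ[K] a) = attpLmul K A B R b (R (b' ⊗ₜ[K] a)))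
    (x y z : A ⊗[K] B) : twistedMul R (twistedMul R x y) z = twistedMul R x (twistedMul R y z) := by
  induction x using TensorProduct.induction_on with
  | zero => simp
  | add x x' hx hx' => simp only [map_add, LinearMap.add_apply, hx, hx']
  | tmul a b =>
    induction y using TensorProduct.induction_on with
    | zero => simp
    | add y y' hy hy' => simp only [map_add, LinearMap.add_apply, hy, hy']
    | tmul a' b' =>
      induction z using TensorProduct.induction_on with
      | zero => simp
      | add z z' hz hz' => simp only [map_add, hz, hz']
      | tmul a'' b'' =>
        rw [twistedMul_tmul, twistedMul_tmul, twistedMul_map_tmul hAassoc hBcomm hleft,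
          twistedMul_tmul_map hBassoc hright]

variable {A₀ : Submodule K A}

theorem IsAltTwistingMap.mul_tmul (hR : IsAltTwistingMap K A B A₀ R)
    (hA₀ : Codisjoint (Submodule.span K {(1 : A)}) A₀) (hBcomm : ∀ x y : B, x * y = y * x)
    (a : A) (b b' : B) : R ((b * b') ⊗ₜ[K] a) = attpLmul K A B R b (R (b' ⊗ₜ[K] a)) := by
  refine LinearMap.congr_fun (LinearMap.ext_of_codisjoint_span_singleton hA₀
    (f := R ∘ₗ TensorProduct.mk K B A (b * b'))
    (g := attpLmul K A B R b ∘ₗ R ∘ₗ TensorProduct.mk K B A b') ?_ (hR.2.2.2 · · b b')) a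
  simp [hR.2.1, attpLmul_tmul, hBcomm b b']

theorem IsAltMul.eq_twistedMul {m : A ⊗[K] B →ₗ[K] A ⊗[K] B →ₗ[K] A ⊗[K] B}
    (hm : IsAltMul K A B A₀ R m) (hA₀ : Codisjoint (Submodule.span K {(1 : A)}) A₀)
    (hBcomm : ∀ x y : B, x * y = y * x) : m = twistedMul R := by
  refine TensorProduct.ext' fun a b ↦ TensorProduct.ext' fun a' b' ↦ ?_
  refine LinearMap.congr_fun (LinearMap.ext_of_codisjoint_span_singleton hA₀
    (f := m.flip (a' ⊗ₜ[K] b') ∘ₗ (TensorProduct.mk K A B).flip b)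
    (g := (twistedMul R).flip (a' ⊗ₜ[K] b') ∘ₗ (TensorProduct.mk K A B).flip b) ?_ ?_) a
  · simp [hm.1, twistedMul_tmul, mulLeft_one, lTensor]
  · intro t ht
    have hb' : mulLeft K b' = mulRight K b' := LinearMap.ext fun z ↦ hBcomm b' z
    simp [hm.2 t ht, twistedMul_tmul, hb']

end TwistedTensorProduct

/-- if `A` is associative and `B` is associative and commutative, the
multiplication of `A ⊗̄_R B` is given on all tensor monomials by
`(a⊗b)(a'⊗b') = a a'_R ⊗ b_R b'`, and `A ⊗̄_R B` is associative. -/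
theorem stmt0 (K A B : Type*) [Field K]
    [NonAssocRing A] [Module K A] [SMulCommClass K A A] [IsScalarTower K A A]
    [NonAssocRing B] [Module K B] [SMulCommClass K B B] [IsScalarTower K B B]
    (hAassoc : ∀ x y z : A, x * y * z = x * (y * z))
    (hBassoc : ∀ x y z : B, x * y * z = x * (y * z))
    (hBcomm : ∀ x y : B, x * y = y * x)
    (A₀ : Submodule K A) (hdec : IsCompl (Submodule.span K {(1 : A)}) A₀)
    (R : B ⊗[K] A →ₗ[K] A ⊗[K] B) (hR : IsAltTwistingMap K A B A₀ R)
    (m : A ⊗[K] B →ₗ[K] A ⊗[K] B →ₗ[K] A ⊗[K] B) (hm : IsAltMul K A B A₀ R m) :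
    (∀ (a : A) (b : B) (a' : A) (b' : B),
        m (a ⊗ₜ[K] b) (a' ⊗ₜ[K] b') =
          (TensorProduct.map (mulLeft K a) (mulRight K b')) (R (b ⊗ₜ[K] a'))) ∧
    (∀ x y z : A ⊗[K] B, m (m x y) z = m x (m y z)) := by
  obtain rfl : m = twistedMul R := hm.eq_twistedMul hdec.codisjoint hBcomm
  exact ⟨twistedMul_tmul R,
    twistedMul_assoc hAassoc hBassoc hBcomm hR.2.2.1 (hR.mul_tmul hdec.codisjoint hBcomm)⟩
end

section
/- Let B be a unital K-algebra with an involution σ, q∈K nonzero, and let R : B⊗C(K,q) → C(K,q)⊗B be the alternative twisting map defined by R(b⊗1) = 1⊗b and R(b⊗v) = v⊗σ(b). Then the linear map a+vb ↦ 1⊗a + v⊗b is an isomorphism of unital algebras from the Cayley–Dickson algebra B̄(q) onto the alternative twisted tensor product C(K,q)⊗̄_R B. -/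
/-!
Since `1, v` is a `K`-basis of `C(K,q)`, every element of `C(K,q) ⊗ B` is uniquely `1 ⊗ a + v ⊗ b`.
For multiplicativity it suffices to compute the four products of `1 ⊗ a`, `v ⊗ b` with `1 ⊗ c`,
`v ⊗ d`: the twist `R(b ⊗ v) = v ⊗ σ(b)` produces the factors `σ(a)` and `σ(b)`, and `v² = q`
produces the term `q d σ(b)` of the Cayley–Dickson product.
-/

open TensorProduct LinearMap

/-- The multiplication of the Cayley–Dickson algebra `B̄(q)`, on `B ⊕ B` with
`a + vb ↔ (a, b)`: `(a+vb)(c+vd) = (ac + q d σ(b)) + v(σ(a)d + cb)`. -/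
def cdMul (K B : Type*) [Field K] [NonAssocRing B] [Module K B]
    (σ : B →ₗ[K] B) (q : K) : B × B → B × B → B × B :=
  fun x y => (x.1 * y.1 + q • (y.2 * σ x.2), σ x.1 * y.2 + y.1 * x.2)

/-- The linear map `B̄(q) → C(K,q) ⊗ B`, `a + vb ↦ 1 ⊗ a + v ⊗ b`. -/
noncomputable def cdToTensor (K B : Type*) [Field K] [NonAssocRing B] [Module K B]
    (q : K) :
    B × B →ₗ[K] (AdjoinRoot (Polynomial.X ^ 2 - Polynomial.C q)) ⊗[K] B :=
  ((TensorProduct.mk K (AdjoinRoot (Polynomial.X ^ 2 - Polynomial.C q)) B) 1) ∘ₗ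
      (LinearMap.fst K B B) +
  ((TensorProduct.mk K (AdjoinRoot (Polynomial.X ^ 2 - Polynomial.C q)) B)
      (AdjoinRoot.root (Polynomial.X ^ 2 - Polynomial.C q))) ∘ₗ (LinearMap.snd K B B)

open Polynomial

theorem Module.Basis.bijective_tmul_add_tmul_of_fin_two {R M N : Type*} [CommSemiring R]
    [AddCommMonoid M] [Module R M] [AddCommMonoid N] [Module R N] (b : Basis (Fin 2) R M) :
    Function.Bijective (fun x : N × N => b 0 ⊗ₜ[R] x.1 + b 1 ⊗ₜ[R] x.2) := by
  let e : (N × N) ≃ₗ[R] M ⊗[R] N := (LinearEquiv.piFinTwo R fun _ => N).symm ≪≫ₗ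
    (Finsupp.linearEquivFunOnFinite R N (Fin 2)).symm ≪≫ₗ (equivFinsuppOfBasisLeft b).symm
  convert e.bijective
  simp [e, equivFinsuppOfBasisLeft_symm_apply, Finsupp.sum_fintype]

namespace AdjoinRoot

variable {K : Type*}

theorem root_X_sq_sub_C_mul_self [CommRing K] (q : K) :
    root (X ^ 2 - C q) * root (X ^ 2 - C q) = q • 1 := by
  have h := eval₂_root (X ^ 2 - C q)
  simp only [eval₂_sub, eval₂_X_pow, eval₂_C, sub_eq_zero] at h
  rw [← sq, h, Algebra.smul_def, mul_one, algebraMap_eq]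

noncomputable def basisXSqSubC [Field K] (q : K) :
    Module.Basis (Fin 2) K (AdjoinRoot (X ^ 2 - C q)) :=
  (powerBasis' (monic_X_pow_sub_C q two_ne_zero)).basis.reindex (finCongr (by simp))

theorem basisXSqSubC_apply [Field K] (q : K) (i : Fin 2) :
    basisXSqSubC q i = root (X ^ 2 - C q) ^ (i : ℕ) := by
  simp [basisXSqSubC]

end AdjoinRoot

theorem IsAltMul.cdMul_eq {K B C : Type*} [Field K]
    [NonAssocRing B] [Module K B] [SMulCommClass K B B] [IsScalarTower K B B]
    [Ring C] [Algebra K C] {C₀ : Submodule K C} {R : B ⊗[K] C →ₗ[K] C ⊗[K] B}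
    {m : C ⊗[K] B →ₗ[K] C ⊗[K] B →ₗ[K] C ⊗[K] B} (hm : IsAltMul K C B C₀ R m)
    (σ : B →ₗ[K] B) (q : K) {v : C} (hv : v ∈ C₀) (hvv : v * v = q • 1)
    (hR1 : ∀ b : B, R (b ⊗ₜ[K] (1 : C)) = 1 ⊗ₜ[K] b)
    (hRv : ∀ b : B, R (b ⊗ₜ[K] v) = v ⊗ₜ[K] σ b) (x y : B × B) :
    (1 : C) ⊗ₜ[K] (cdMul K B σ q x y).1 + v ⊗ₜ[K] (cdMul K B σ q x y).2 =
      m ((1 : C) ⊗ₜ[K] x.1 + v ⊗ₜ[K] x.2) ((1 : C) ⊗ₜ[K] y.1 + v ⊗ₜ[K] y.2) := by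
  obtain ⟨a, b⟩ := x
  obtain ⟨c, d⟩ := y
  have h11 : m ((1 : C) ⊗ₜ[K] a) ((1 : C) ⊗ₜ[K] c) = (1 : C) ⊗ₜ[K] (a * c) := by
    rw [hm.1, hR1, lTensor_tmul, mulRight_apply]
  have h12 : m ((1 : C) ⊗ₜ[K] a) (v ⊗ₜ[K] d) = v ⊗ₜ[K] (σ a * d) := by
    rw [hm.1, hRv, lTensor_tmul, mulRight_apply]
  have h21 : m (v ⊗ₜ[K] b) ((1 : C) ⊗ₜ[K] c) = v ⊗ₜ[K] (c * b) := by
    rw [hm.2 v hv, hR1, map_tmul, mulLeft_apply, mulLeft_apply, mul_one]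
  have h22 : m (v ⊗ₜ[K] b) (v ⊗ₜ[K] d) = (1 : C) ⊗ₜ[K] (q • (d * σ b)) := by
    rw [hm.2 v hv, hRv, map_tmul, mulLeft_apply, mulLeft_apply, hvv, smul_tmul]
  simp only [cdMul, map_add, LinearMap.add_apply, h11, h12, h21, h22, tmul_add]
  abel

theorem cdToTensor_apply {K B : Type*} [Field K] [NonAssocRing B] [Module K B] (q : K)
    (x : B × B) : cdToTensor K B q x = 1 ⊗ₜ[K] x.1 + AdjoinRoot.root (X ^ 2 - C q) ⊗ₜ[K] x.2 :=
  rfl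

theorem stmt3_general (K B : Type*) [Field K]
    [NonAssocRing B] [Module K B] [SMulCommClass K B B] [IsScalarTower K B B]
    (σ : B →ₗ[K] B) (q : K)
    (R : B ⊗[K] (AdjoinRoot (Polynomial.X ^ 2 - Polynomial.C q)) →ₗ[K]
         (AdjoinRoot (Polynomial.X ^ 2 - Polynomial.C q)) ⊗[K] B)
    (hR1 : ∀ b : B,
      R (b ⊗ₜ[K] (1 : AdjoinRoot (Polynomial.X ^ 2 - Polynomial.C q))) = 1 ⊗ₜ[K] b)
    (hRv : ∀ b : B,
      R (b ⊗ₜ[K] AdjoinRoot.root (Polynomial.X ^ 2 - Polynomial.C q)) =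
        (AdjoinRoot.root (Polynomial.X ^ 2 - Polynomial.C q)) ⊗ₜ[K] σ b)
    (m : (AdjoinRoot (Polynomial.X ^ 2 - Polynomial.C q)) ⊗[K] B →ₗ[K]
         (AdjoinRoot (Polynomial.X ^ 2 - Polynomial.C q)) ⊗[K] B →ₗ[K]
         (AdjoinRoot (Polynomial.X ^ 2 - Polynomial.C q)) ⊗[K] B)
    (hm : IsAltMul K (AdjoinRoot (Polynomial.X ^ 2 - Polynomial.C q)) B
      (Submodule.span K {AdjoinRoot.root (Polynomial.X ^ 2 - Polynomial.C q : Polynomial K)}) R m) :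
    Function.Bijective (cdToTensor K B q) ∧
    cdToTensor K B q ((1 : B), (0 : B)) =
      (1 : AdjoinRoot (Polynomial.X ^ 2 - Polynomial.C q)) ⊗ₜ[K] (1 : B) ∧
    (∀ x y : B × B,
      cdToTensor K B q (cdMul K B σ q x y) = m (cdToTensor K B q x) (cdToTensor K B q y)) := by
  refine ⟨?_, by simp [cdToTensor_apply], fun x y => ?_⟩
  · convert (AdjoinRoot.basisXSqSubC q).bijective_tmul_add_tmul_of_fin_two (N := B) using 1
    funext x
    simp [cdToTensor_apply, AdjoinRoot.basisXSqSubC_apply]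
  · exact hm.cdMul_eq σ q (Submodule.mem_span_singleton_self _)
      (AdjoinRoot.root_X_sq_sub_C_mul_self q) hR1 hRv x y

/-- `a+vb ↦ 1⊗a + v⊗b` is an isomorphism of unital algebras from the
Cayley–Dickson algebra `B̄(q)` onto `C(K,q) ⊗̄_R B`. -/
theorem stmt3 (K B : Type*) [Field K]
    [NonAssocRing B] [Module K B] [SMulCommClass K B B] [IsScalarTower K B B]
    (σ : B →ₗ[K] B) (hσmul : ∀ x y : B, σ (x * y) = σ y * σ x)
    (hσone : σ 1 = 1) (hσinv : ∀ x : B, σ (σ x) = x)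
    (q : K) (hq : q ≠ 0)
    (R : B ⊗[K] (AdjoinRoot (Polynomial.X ^ 2 - Polynomial.C q)) →ₗ[K]
         (AdjoinRoot (Polynomial.X ^ 2 - Polynomial.C q)) ⊗[K] B)
    (hR1 : ∀ b : B,
      R (b ⊗ₜ[K] (1 : AdjoinRoot (Polynomial.X ^ 2 - Polynomial.C q))) = 1 ⊗ₜ[K] b)
    (hRv : ∀ b : B,
      R (b ⊗ₜ[K] AdjoinRoot.root (Polynomial.X ^ 2 - Polynomial.C q)) =
        (AdjoinRoot.root (Polynomial.X ^ 2 - Polynomial.C q)) ⊗ₜ[K] σ b)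
    (hR : IsAltTwistingMap K (AdjoinRoot (Polynomial.X ^ 2 - Polynomial.C q)) B
      (Submodule.span K {AdjoinRoot.root (Polynomial.X ^ 2 - Polynomial.C q : Polynomial K)}) R)
    (m : (AdjoinRoot (Polynomial.X ^ 2 - Polynomial.C q)) ⊗[K] B →ₗ[K]
         (AdjoinRoot (Polynomial.X ^ 2 - Polynomial.C q)) ⊗[K] B →ₗ[K]
         (AdjoinRoot (Polynomial.X ^ 2 - Polynomial.C q)) ⊗[K] B)
    (hm : IsAltMul K (AdjoinRoot (Polynomial.X ^ 2 - Polynomial.C q)) B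
      (Submodule.span K {AdjoinRoot.root (Polynomial.X ^ 2 - Polynomial.C q : Polynomial K)}) R m) :
    Function.Bijective (cdToTensor K B q) ∧
    cdToTensor K B q ((1 : B), (0 : B)) =
      (1 : AdjoinRoot (Polynomial.X ^ 2 - Polynomial.C q)) ⊗ₜ[K] (1 : B) ∧
    (∀ x y : B × B,
      cdToTensor K B q (cdMul K B σ q x y) = m (cdToTensor K B q x) (cdToTensor K B q y)) :=
  stmt3_general K B σ q R hR1 hRv m hm
end

section
/- Let A be an associative unital K-algebra with an involutive algebra automorphism σ (σ² = id_A) and q∈K nonzero. Then the Clifford-process algebra Cl(A) is associative. -/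
/-!
With `x = a + bv`, `y = c + dv`, `z = e + fv`, each component of `(xy)z` and of `x(yz)` expands
into the same four monomials once terms such as `σ (d σ(e))` are rewritten as `σ(d) e`, which is
where multiplicativity and involutivity of `σ` enter; `K`-linearity lets `σ` pass the scalar `q`.
-/

/-- The multiplication of the Clifford-process algebra `Cl(A)`, on `A ⊕ A` with
`a + bv ↔ (a, b)`: `(a+bv)(c+dv) = (ac + q bσ(d)) + (ad + bσ(c))v`. -/
def clMul (K A : Type*) [Field K] [NonAssocRing A] [Module K A]
    (σ : A →ₗ[K] A) (q : K) : A × A → A × A → A × A :=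
  fun x y => (x.1 * y.1 + q • (x.2 * σ y.2), x.1 * y.2 + x.2 * σ y.1)

theorem stmt5_general (K A : Type*) [Field K] [Ring A] [Algebra K A]
    (σ : A →ₗ[K] A) (hσmul : ∀ x y : A, σ (x * y) = σ x * σ y)
    (hσinv : ∀ x : A, σ (σ x) = x)
    (q : K) :
    ∀ x y z : A × A,
      clMul K A σ q (clMul K A σ q x y) z = clMul K A σ q x (clMul K A σ q y z) := by
  rintro ⟨a, b⟩ ⟨c, d⟩ ⟨e, f⟩
  simp only [clMul, map_add, map_smul, hσmul, hσinv]
  ext <;> simp only [mul_add, add_mul, smul_add, smul_mul_assoc, mul_smul_comm, mul_assoc] <;> abel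

/-- if `A` is an associative unital `K`-algebra with an involutive algebra
automorphism `σ` and `q ≠ 0`, then the Clifford-process algebra `Cl(A)` is associative. -/
theorem stmt5 (K A : Type*) [Field K] [Ring A] [Algebra K A]
    (σ : A →ₗ[K] A) (hσmul : ∀ x y : A, σ (x * y) = σ x * σ y)
    (hσone : σ 1 = 1) (hσinv : ∀ x : A, σ (σ x) = x)
    (q : K) (hq : q ≠ 0) :
    ∀ x y z : A × A,
      clMul K A σ q (clMul K A σ q x y) z = clMul K A σ q x (clMul K A σ q y z) :=
  stmt5_general K A σ hσmul hσinv q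
end

section
/- Let A⊗̄_R B and E⊗̄_T F be two alternative twisted tensor products of algebras, and let f : A → E and g : B → F be unital algebra maps such that f(A₀) ⊆ E₀ and (f⊗g)∘R = T∘(g⊗f). Then f⊗g : A⊗̄_R B → E⊗̄_T F is a unital algebra map. -/
/-!
Both products are bilinear, so it suffices to compare them on pure tensors `(a ⊗ b)(a' ⊗ b')`,
and, by linearity in `a` and `A = K·1 ⊕ A₀`, only for `a = 1` and `a ∈ A₀`. There the product is
`R(b ⊗ a')` followed by multiplications in the tensor factors; since `f` and `g` are multiplicative
these commute with `f ⊗ g`, and `(f ⊗ g) ∘ R = T ∘ (g ⊗ f)` turns `R(b ⊗ a')` into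
`T(g b ⊗ f a')`, which is the corresponding product in `E ⊗̄_T F` (using `f(A₀) ⊆ E₀`).
-/

open TensorProduct LinearMap

section TensorMap

variable {K A B E F : Type*} [CommSemiring K]

section Mul

variable [NonUnitalNonAssocSemiring A] [Module K A] [NonUnitalNonAssocSemiring E] [Module K E]
  {f : A →ₗ[K] E}

theorem comp_mulLeft_of_map_mul [SMulCommClass K A A] [SMulCommClass K E E]
    (hf : ∀ x y : A, f (x * y) = f x * f y) (a : A) :
    f ∘ₗ mulLeft K a = mulLeft K (f a) ∘ₗ f :=
  LinearMap.ext fun x => hf a x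

theorem comp_mulRight_of_map_mul [IsScalarTower K A A] [IsScalarTower K E E]
    (hf : ∀ x y : A, f (x * y) = f x * f y) (a : A) :
    f ∘ₗ mulRight K a = mulRight K (f a) ∘ₗ f :=
  LinearMap.ext fun x => hf x a

end Mul

variable [AddCommMonoid A] [Module K A] [AddCommMonoid B] [Module K B]
  [AddCommMonoid E] [Module K E] [AddCommMonoid F] [Module K F]
  {f : A →ₗ[K] E} {g : B →ₗ[K] F}

theorem map_comp_map_of_comp_eq {φ : A →ₗ[K] A} {φ' : E →ₗ[K] E} {ψ : B →ₗ[K] B}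
    {ψ' : F →ₗ[K] F} (hφ : f ∘ₗ φ = φ' ∘ₗ f) (hψ : g ∘ₗ ψ = ψ' ∘ₗ g) :
    map f g ∘ₗ map φ ψ = map φ' ψ' ∘ₗ map f g := by
  rw [← map_comp, hφ, hψ, map_comp]

theorem map_comp_lTensor_of_comp_eq {ψ : B →ₗ[K] B} {ψ' : F →ₗ[K] F}
    (hψ : g ∘ₗ ψ = ψ' ∘ₗ g) :
    map f g ∘ₗ lTensor A ψ = lTensor E ψ' ∘ₗ map f g := by
  rw [map_comp_lTensor, hψ, lTensor_comp_map]

theorem map_apply_of_map_comp_eq {R : B ⊗[K] A →ₗ[K] A ⊗[K] B} {T : F ⊗[K] E →ₗ[K] E ⊗[K] F}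
    (hcomp : map f g ∘ₗ R = T ∘ₗ map g f) (b : B) (a : A) :
    map f g (R (b ⊗ₜ a)) = T (g b ⊗ₜ f a) := by
  simpa using LinearMap.congr_fun hcomp (b ⊗ₜ[K] a)

end TensorMap

section AltTwistedTensorProduct

variable {K A B E F : Type*} [Field K]
  [NonAssocRing A] [Module K A] [SMulCommClass K A A]
  [NonAssocRing B] [Module K B] [SMulCommClass K B B] [IsScalarTower K B B]
  [NonAssocRing E] [Module K E] [SMulCommClass K E E]
  [NonAssocRing F] [Module K F] [SMulCommClass K F F] [IsScalarTower K F F]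
  {A₀ : Submodule K A} {E₀ : Submodule K E}
  {R : B ⊗[K] A →ₗ[K] A ⊗[K] B} {mR : A ⊗[K] B →ₗ[K] A ⊗[K] B →ₗ[K] A ⊗[K] B}
  {T : F ⊗[K] E →ₗ[K] E ⊗[K] F} {mT : E ⊗[K] F →ₗ[K] E ⊗[K] F →ₗ[K] E ⊗[K] F}
  {f : A →ₗ[K] E} {g : B →ₗ[K] F}

theorem map_altMul_one_tmul (hmR : IsAltMul K A B A₀ R mR) (hmT : IsAltMul K E F E₀ T mT)
    (hgmul : ∀ x y : B, g (x * y) = g x * g y) (hcomp : map f g ∘ₗ R = T ∘ₗ map g f)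
    (b : B) (a' : A) (b' : B) :
    map f g (mR (1 ⊗ₜ b) (a' ⊗ₜ b')) = mT (1 ⊗ₜ g b) (f a' ⊗ₜ g b') := by
  rw [hmR.1, hmT.1, ← map_apply_of_map_comp_eq hcomp]
  exact LinearMap.congr_fun (map_comp_lTensor_of_comp_eq (comp_mulRight_of_map_mul hgmul b')) _

theorem map_altMul_tmul_of_mem (hmR : IsAltMul K A B A₀ R mR) (hmT : IsAltMul K E F E₀ T mT)
    (hfmul : ∀ x y : A, f (x * y) = f x * f y) (hgmul : ∀ x y : B, g (x * y) = g x * g y)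
    (hcomp : map f g ∘ₗ R = T ∘ₗ map g f) {a : A} (ha : a ∈ A₀) (hfa : f a ∈ E₀)
    (b : B) (a' : A) (b' : B) :
    map f g (mR (a ⊗ₜ b) (a' ⊗ₜ b')) = mT (f a ⊗ₜ g b) (f a' ⊗ₜ g b') := by
  rw [hmR.2 a ha, hmT.2 _ hfa, ← map_apply_of_map_comp_eq hcomp]
  exact LinearMap.congr_fun (map_comp_map_of_comp_eq (comp_mulLeft_of_map_mul hfmul a)
    (comp_mulLeft_of_map_mul hgmul b')) _

theorem map_altMul_tmul (hA : Codisjoint (Submodule.span K {(1 : A)}) A₀)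
    (hmR : IsAltMul K A B A₀ R mR) (hmT : IsAltMul K E F E₀ T mT)
    (hfmul : ∀ x y : A, f (x * y) = f x * f y) (hfone : f 1 = 1)
    (hgmul : ∀ x y : B, g (x * y) = g x * g y) (hf0 : ∀ a ∈ A₀, f a ∈ E₀)
    (hcomp : map f g ∘ₗ R = T ∘ₗ map g f) (a : A) (b : B) (a' : A) (b' : B) :
    map f g (mR (a ⊗ₜ b) (a' ⊗ₜ b')) = mT (f a ⊗ₜ g b) (f a' ⊗ₜ g b') := by
  let lhs : A →ₗ[K] E ⊗[K] F := map f g ∘ₗ mR.flip (a' ⊗ₜ b') ∘ₗ (TensorProduct.mk K A B).flip b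
  let rhs : A →ₗ[K] E ⊗[K] F :=
    mT.flip (f a' ⊗ₜ g b') ∘ₗ (TensorProduct.mk K E F).flip (g b) ∘ₗ f
  suffices lhs = rhs from LinearMap.congr_fun this a
  refine LinearMap.ext_on_codisjoint hA ?_ fun a₀ ha₀ => ?_
  · refine LinearMap.eqOn_span' (Set.eqOn_singleton.mpr ?_)
    simpa [lhs, rhs, hfone] using map_altMul_one_tmul hmR hmT hgmul hcomp b a' b'
  · exact map_altMul_tmul_of_mem hmR hmT hfmul hgmul hcomp ha₀ (hf0 a₀ ha₀) b a' b'

end AltTwistedTensorProduct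

theorem stmt11_general (K A B E F : Type*) [Field K]
    [NonAssocRing A] [Module K A] [SMulCommClass K A A]
    [NonAssocRing B] [Module K B] [SMulCommClass K B B] [IsScalarTower K B B]
    [NonAssocRing E] [Module K E] [SMulCommClass K E E]
    [NonAssocRing F] [Module K F] [SMulCommClass K F F] [IsScalarTower K F F]
    (A₀ : Submodule K A) (hdecA : IsCompl (Submodule.span K {(1 : A)}) A₀)
    (E₀ : Submodule K E)
    (R : B ⊗[K] A →ₗ[K] A ⊗[K] B)
    (mR : A ⊗[K] B →ₗ[K] A ⊗[K] B →ₗ[K] A ⊗[K] B) (hmR : IsAltMul K A B A₀ R mR)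
    (T : F ⊗[K] E →ₗ[K] E ⊗[K] F)
    (mT : E ⊗[K] F →ₗ[K] E ⊗[K] F →ₗ[K] E ⊗[K] F) (hmT : IsAltMul K E F E₀ T mT)
    (f : A →ₗ[K] E) (hfmul : ∀ x y : A, f (x * y) = f x * f y) (hfone : f 1 = 1)
    (g : B →ₗ[K] F) (hgmul : ∀ x y : B, g (x * y) = g x * g y) (hgone : g 1 = 1)
    (hf0 : ∀ a ∈ A₀, f a ∈ E₀)
    (hcomp : (TensorProduct.map f g) ∘ₗ R = T ∘ₗ (TensorProduct.map g f)) :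
    (TensorProduct.map f g) ((1 : A) ⊗ₜ[K] (1 : B)) = (1 : E) ⊗ₜ[K] (1 : F) ∧
    (∀ x y : A ⊗[K] B,
      (TensorProduct.map f g) (mR x y) =
        mT ((TensorProduct.map f g) x) ((TensorProduct.map f g) y)) := by
  refine ⟨by rw [map_tmul, hfone, hgone], fun x y => ?_⟩
  have hbilin : mR.compr₂ (map f g) = mT.compl₁₂ (map f g) (map f g) :=
    TensorProduct.ext' fun a b => TensorProduct.ext' fun a' b' =>
      map_altMul_tmul hdecA.codisjoint hmR hmT hfmul hfone hgmul hf0 hcomp a b a' b'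
  exact LinearMap.congr_fun₂ hbilin x y

/-- given alternative twisted tensor products `A ⊗̄_R B` and `E ⊗̄_T F`
and unital algebra maps `f : A → E`, `g : B → F` with `f(A₀) ⊆ E₀` and
`(f⊗g) ∘ R = T ∘ (g⊗f)`, the map `f⊗g : A ⊗̄_R B → E ⊗̄_T F` is a unital algebra map. -/
theorem stmt11 (K A B E F : Type*) [Field K]
    [NonAssocRing A] [Module K A] [SMulCommClass K A A] [IsScalarTower K A A]
    [NonAssocRing B] [Module K B] [SMulCommClass K B B] [IsScalarTower K B B]
    [NonAssocRing E] [Module K E] [SMulCommClass K E E] [IsScalarTower K E E]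
    [NonAssocRing F] [Module K F] [SMulCommClass K F F] [IsScalarTower K F F]
    (A₀ : Submodule K A) (hdecA : IsCompl (Submodule.span K {(1 : A)}) A₀)
    (E₀ : Submodule K E) (hdecE : IsCompl (Submodule.span K {(1 : E)}) E₀)
    (R : B ⊗[K] A →ₗ[K] A ⊗[K] B) (hR : IsAltTwistingMap K A B A₀ R)
    (mR : A ⊗[K] B →ₗ[K] A ⊗[K] B →ₗ[K] A ⊗[K] B) (hmR : IsAltMul K A B A₀ R mR)
    (T : F ⊗[K] E →ₗ[K] E ⊗[K] F) (hT : IsAltTwistingMap K E F E₀ T)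
    (mT : E ⊗[K] F →ₗ[K] E ⊗[K] F →ₗ[K] E ⊗[K] F) (hmT : IsAltMul K E F E₀ T mT)
    (f : A →ₗ[K] E) (hfmul : ∀ x y : A, f (x * y) = f x * f y) (hfone : f 1 = 1)
    (g : B →ₗ[K] F) (hgmul : ∀ x y : B, g (x * y) = g x * g y) (hgone : g 1 = 1)
    (hf0 : ∀ a ∈ A₀, f a ∈ E₀)
    (hcomp : (TensorProduct.map f g) ∘ₗ R = T ∘ₗ (TensorProduct.map g f)) :
    (TensorProduct.map f g) ((1 : A) ⊗ₜ[K] (1 : B)) = (1 : E) ⊗ₜ[K] (1 : F) ∧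
    (∀ x y : A ⊗[K] B,
      (TensorProduct.map f g) (mR x y) =
        mT ((TensorProduct.map f g) x) ((TensorProduct.map f g) y)) :=
  stmt11_general K A B E F A₀ hdecA E₀ R mR hmR T mT hmT f hfmul hfone g hgmul hgone hf0 hcomp
end

section
/- Let A = K·1_A ⊕ A₀ be a unital K-algebra with A₀·A₀ ⊆ K·1_A, B a unital K-algebra with a strong involution σ, and R : B⊗A → A⊗B the alternative twisting map given by R(b⊗1_A) = 1_A⊗b and R(b⊗a) = a⊗σ(b) for a∈A₀. Assume moreover that A and B are alternative algebras. Then in A⊗̄_R B, for all b,b'∈B and all a,a'∈A each of which lies either in K·1_A or in A₀, the left and right alternative laws hold for tensor monomials: [(a⊗b)(a⊗b)](a'⊗b') = (a⊗b)[(a⊗b)(a'⊗b')] and (a⊗b)[(a'⊗b')(a'⊗b')] = [(a⊗b)(a'⊗b')](a'⊗b'). -/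
open TensorProduct LinearMap

/-! On homogeneous monomials the twisted product has four explicit forms:
`(1⊗b)(1⊗b') = 1⊗bb'`, `(1⊗b)(a'⊗b') = a'⊗σ(b)b'`, `(a⊗b)(1⊗b') = a⊗b'b` and
`(a⊗b)(a'⊗b') = 1⊗c·b'σ(b)` when `aa' = c·1`. Each law then comes down to an alternative
law of `B` or to one of two facts. In `B`, writing `σ(b) = t - b` turns the associators of
`b, σ(b), z` into alternative associators, so multiplying by `b` and `σ(b)` in either order is
multiplication by the norm `bσ(b) ∈ K`. In `A`, if `aa = k`, `a'a' = k'` and `aa' = c`, the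
alternative laws give `k a' = c a` and `k' a = c a'`, which match the `A`-factors of the two
sides. -/

open Submodule

section Alternative

variable {K D : Type*} [Field K] [NonAssocRing D] [Module K D]

theorem exists_eq_smul_one_sub_of_add_mem_span_one {x y : D}
    (h : x + y ∈ span K {(1 : D)}) : ∃ t : K, y = t • 1 - x := by
  obtain ⟨t, ht⟩ := mem_span_singleton.mp h
  exact ⟨t, eq_sub_of_add_eq' ht.symm⟩

theorem mul_comm_of_add_mem_span_one [SMulCommClass K D D] [IsScalarTower K D D] {x y : D}
    (h : x + y ∈ span K {(1 : D)}) : y * x = x * y := by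
  obtain ⟨t, rfl⟩ := exists_eq_smul_one_sub_of_add_mem_span_one h
  simp only [sub_mul, mul_sub, smul_mul_assoc, mul_smul_comm, one_mul, mul_one]

theorem mul_assoc_of_add_mem_span_one_left [SMulCommClass K D D] [IsScalarTower K D D]
    (hl : ∀ x y : D, x * x * y = x * (x * y)) {x y : D} (h : x + y ∈ span K {(1 : D)})
    (z : D) : x * y * z = x * (y * z) := by
  obtain ⟨t, rfl⟩ := exists_eq_smul_one_sub_of_add_mem_span_one h
  simp only [sub_mul, mul_sub, smul_mul_assoc, mul_smul_comm, one_mul, mul_one, hl]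

theorem mul_assoc_of_add_mem_span_one_right [SMulCommClass K D D]
    (hr : ∀ x y : D, x * (y * y) = x * y * y) {y w : D} (h : y + w ∈ span K {(1 : D)})
    (x : D) : x * y * w = x * (y * w) := by
  obtain ⟨t, rfl⟩ := exists_eq_smul_one_sub_of_add_mem_span_one h
  simp only [mul_sub, mul_smul_comm, mul_one, hr]

variable [SMulCommClass K D D] [IsScalarTower K D D]

theorem smul_eq_smul_of_left_alternative (hl : ∀ x y : D, x * x * y = x * (x * y))
    {a a' : D} {k c : K} (hk : a * a = k • 1) (hc : a * a' = c • 1) : k • a' = c • a := by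
  have h := hl a a'
  rwa [hk, hc, smul_mul_assoc, one_mul, mul_smul_comm, mul_one] at h

theorem smul_eq_smul_of_right_alternative (hr : ∀ x y : D, x * (y * y) = x * y * y)
    {a a' : D} {k c : K} (hk : a' * a' = k • 1) (hc : a * a' = c • 1) : k • a = c • a' := by
  have h := hr a a'
  rwa [hk, hc, mul_smul_comm, mul_one, smul_mul_assoc, one_mul] at h

end Alternative

structure IsStrongInvolution {K B : Type*} [Field K] [NonAssocRing B] [Module K B]
    (σ : B →ₗ[K] B) : Prop where
  map_mul : ∀ x y : B, σ (x * y) = σ y * σ x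
  map_one : σ 1 = 1
  involutive : ∀ x : B, σ (σ x) = x
  add_self_mem : ∀ b : B, b + σ b ∈ span K {(1 : B)}
  mul_self_mem : ∀ b : B, b * σ b ∈ span K {(1 : B)}

namespace IsStrongInvolution

variable {K B : Type*} [Field K] [NonAssocRing B] [Module K B] {σ : B →ₗ[K] B} {b : B} {n : K}

theorem self_mul_apply_mul_eq_smul [SMulCommClass K B B] [IsScalarTower K B B]
    (hσ : IsStrongInvolution σ)
    (hl : ∀ x y : B, x * x * y = x * (x * y)) (hn : b * σ b = n • 1) (z : B) :
    b * (σ b * z) = n • z := by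
  rw [← mul_assoc_of_add_mem_span_one_left hl (hσ.add_self_mem b), hn, smul_mul_assoc, one_mul]

theorem mul_self_mul_apply_eq_smul [SMulCommClass K B B] (hσ : IsStrongInvolution σ)
    (hr : ∀ x y : B, x * (y * y) = x * y * y) (hn : b * σ b = n • 1) (z : B) :
    z * b * σ b = n • z := by
  rw [mul_assoc_of_add_mem_span_one_right hr (hσ.add_self_mem b), hn, mul_smul_comm, mul_one]

theorem mul_apply_mul_self_eq_smul [SMulCommClass K B B] [IsScalarTower K B B]
    (hσ : IsStrongInvolution σ)
    (hr : ∀ x y : B, x * (y * y) = x * y * y) (hn : b * σ b = n • 1) (z : B) :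
    z * σ b * b = n • z := by
  rw [mul_assoc_of_add_mem_span_one_right hr ((add_comm b (σ b)).subst (hσ.add_self_mem b)),
    mul_comm_of_add_mem_span_one (hσ.add_self_mem b), hn, mul_smul_comm, mul_one]

end IsStrongInvolution

def AlternativeLaws {K M : Type*} [CommSemiring K] [AddCommMonoid M] [Module K M]
    (m : M →ₗ[K] M →ₗ[K] M) (x y : M) : Prop :=
  m (m x x) y = m x (m x y) ∧ m x (m y y) = m (m x y) y

namespace IsAltMul

variable {K A B : Type*} [Field K]
  [NonAssocRing A] [Module K A] [SMulCommClass K A A]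
  [NonAssocRing B] [Module K B] [SMulCommClass K B B] [IsScalarTower K B B]
  {A₀ : Submodule K A} {σ : B →ₗ[K] B} {R : B ⊗[K] A →ₗ[K] A ⊗[K] B}
  {m : A ⊗[K] B →ₗ[K] A ⊗[K] B →ₗ[K] A ⊗[K] B}

theorem one_tmul_mul_one_tmul (hm : IsAltMul K A B A₀ R m)
    (hR1 : ∀ b : B, R (b ⊗ₜ[K] (1 : A)) = (1 : A) ⊗ₜ[K] b) (b b' : B) :
    m ((1 : A) ⊗ₜ[K] b) ((1 : A) ⊗ₜ[K] b') = (1 : A) ⊗ₜ[K] (b * b') := by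
  rw [hm.1, hR1, lTensor_tmul, mulRight_apply]

theorem one_tmul_mul_tmul (hm : IsAltMul K A B A₀ R m)
    (hR0 : ∀ a ∈ A₀, ∀ b : B, R (b ⊗ₜ[K] a) = a ⊗ₜ[K] σ b) {a' : A} (ha' : a' ∈ A₀)
    (b b' : B) : m ((1 : A) ⊗ₜ[K] b) (a' ⊗ₜ[K] b') = a' ⊗ₜ[K] (σ b * b') := by
  rw [hm.1, hR0 a' ha', lTensor_tmul, mulRight_apply]

theorem tmul_mul_one_tmul (hm : IsAltMul K A B A₀ R m)
    (hR1 : ∀ b : B, R (b ⊗ₜ[K] (1 : A)) = (1 : A) ⊗ₜ[K] b) {a : A} (ha : a ∈ A₀)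
    (b b' : B) : m (a ⊗ₜ[K] b) ((1 : A) ⊗ₜ[K] b') = a ⊗ₜ[K] (b' * b) := by
  rw [hm.2 a ha, hR1, map_tmul, mulLeft_apply, mulLeft_apply, mul_one]

theorem tmul_mul_tmul_of_mul_eq (hm : IsAltMul K A B A₀ R m)
    (hR0 : ∀ a ∈ A₀, ∀ b : B, R (b ⊗ₜ[K] a) = a ⊗ₜ[K] σ b) {a a' : A} (ha : a ∈ A₀)
    (ha' : a' ∈ A₀) {c : K} (hc : a * a' = c • 1) (b b' : B) :
    m (a ⊗ₜ[K] b) (a' ⊗ₜ[K] b') = (1 : A) ⊗ₜ[K] (c • (b' * σ b)) := by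
  rw [hm.2 a ha, hR0 a' ha', map_tmul, mulLeft_apply, mulLeft_apply, hc, smul_tmul]

theorem alternativeLaws_one_tmul_one_tmul (hm : IsAltMul K A B A₀ R m)
    (hR1 : ∀ b : B, R (b ⊗ₜ[K] (1 : A)) = (1 : A) ⊗ₜ[K] b)
    (hl : ∀ x y : B, x * x * y = x * (x * y)) (hr : ∀ x y : B, x * (y * y) = x * y * y)
    (b b' : B) : AlternativeLaws m ((1 : A) ⊗ₜ[K] b) ((1 : A) ⊗ₜ[K] b') := by
  constructor <;> simp only [hm.one_tmul_mul_one_tmul hR1, hl, hr]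

theorem alternativeLaws_one_tmul_tmul (hm : IsAltMul K A B A₀ R m)
    (hR1 : ∀ b : B, R (b ⊗ₜ[K] (1 : A)) = (1 : A) ⊗ₜ[K] b)
    (hR0 : ∀ a ∈ A₀, ∀ b : B, R (b ⊗ₜ[K] a) = a ⊗ₜ[K] σ b) (hσ : IsStrongInvolution σ)
    (hl : ∀ x y : B, x * x * y = x * (x * y))
    (h00 : ∀ x ∈ A₀, ∀ y ∈ A₀, x * y ∈ span K {(1 : A)}) {a' : A} (ha' : a' ∈ A₀)
    (b b' : B) : AlternativeLaws m ((1 : A) ⊗ₜ[K] b) (a' ⊗ₜ[K] b') := by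
  obtain ⟨k', hk'⟩ := mem_span_singleton.mp (h00 a' ha' a' ha')
  obtain ⟨n', hn'⟩ := mem_span_singleton.mp (hσ.mul_self_mem b')
  constructor
  · rw [hm.one_tmul_mul_one_tmul hR1, hm.one_tmul_mul_tmul hR0 ha',
      hm.one_tmul_mul_tmul hR0 ha', hm.one_tmul_mul_tmul hR0 ha', hσ.map_mul, hl]
  · rw [hm.tmul_mul_tmul_of_mul_eq hR0 ha' ha' hk'.symm, hm.one_tmul_mul_one_tmul hR1,
      hm.one_tmul_mul_tmul hR0 ha', hm.tmul_mul_tmul_of_mul_eq hR0 ha' ha' hk'.symm,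
      hσ.map_mul, hσ.involutive, hσ.self_mul_apply_mul_eq_smul hl hn'.symm, ← hn',
      mul_smul_comm, mul_smul_comm, mul_one]

theorem alternativeLaws_tmul_one_tmul (hm : IsAltMul K A B A₀ R m)
    (hR1 : ∀ b : B, R (b ⊗ₜ[K] (1 : A)) = (1 : A) ⊗ₜ[K] b)
    (hR0 : ∀ a ∈ A₀, ∀ b : B, R (b ⊗ₜ[K] a) = a ⊗ₜ[K] σ b) (hσ : IsStrongInvolution σ)
    (hl : ∀ x y : B, x * x * y = x * (x * y)) (hr : ∀ x y : B, x * (y * y) = x * y * y)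
    (h00 : ∀ x ∈ A₀, ∀ y ∈ A₀, x * y ∈ span K {(1 : A)}) {a : A} (ha : a ∈ A₀)
    (b b' : B) : AlternativeLaws m (a ⊗ₜ[K] b) ((1 : A) ⊗ₜ[K] b') := by
  obtain ⟨k, hk⟩ := mem_span_singleton.mp (h00 a ha a ha)
  obtain ⟨n, hn⟩ := mem_span_singleton.mp (hσ.mul_self_mem b)
  constructor
  · rw [hm.tmul_mul_tmul_of_mul_eq hR0 ha ha hk.symm, hm.one_tmul_mul_one_tmul hR1,
      hm.tmul_mul_one_tmul hR1 ha, hm.tmul_mul_tmul_of_mul_eq hR0 ha ha hk.symm,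
      hσ.mul_self_mul_apply_eq_smul hr hn.symm, ← hn, smul_mul_assoc, smul_mul_assoc,
      one_mul]
  · rw [hm.one_tmul_mul_one_tmul hR1, hm.tmul_mul_one_tmul hR1 ha,
      hm.tmul_mul_one_tmul hR1 ha, hm.tmul_mul_one_tmul hR1 ha, hl]

theorem alternativeLaws_tmul_tmul [IsScalarTower K A A] (hm : IsAltMul K A B A₀ R m)
    (hR1 : ∀ b : B, R (b ⊗ₜ[K] (1 : A)) = (1 : A) ⊗ₜ[K] b)
    (hR0 : ∀ a ∈ A₀, ∀ b : B, R (b ⊗ₜ[K] a) = a ⊗ₜ[K] σ b) (hσ : IsStrongInvolution σ)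
    (hr : ∀ x y : B, x * (y * y) = x * y * y)
    (h00 : ∀ x ∈ A₀, ∀ y ∈ A₀, x * y ∈ span K {(1 : A)})
    (hAl : ∀ x y : A, x * x * y = x * (x * y)) (hAr : ∀ x y : A, x * (y * y) = x * y * y)
    {a a' : A} (ha : a ∈ A₀) (ha' : a' ∈ A₀) (b b' : B) :
    AlternativeLaws m (a ⊗ₜ[K] b) (a' ⊗ₜ[K] b') := by
  obtain ⟨k, hk⟩ := mem_span_singleton.mp (h00 a ha a ha)
  obtain ⟨k', hk'⟩ := mem_span_singleton.mp (h00 a' ha' a' ha')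
  obtain ⟨c, hc⟩ := mem_span_singleton.mp (h00 a ha a' ha')
  obtain ⟨n, hn⟩ := mem_span_singleton.mp (hσ.mul_self_mem b)
  obtain ⟨n', hn'⟩ := mem_span_singleton.mp (hσ.mul_self_mem b')
  constructor
  · calc m (m (a ⊗ₜ[K] b) (a ⊗ₜ[K] b)) (a' ⊗ₜ[K] b') = (k • a') ⊗ₜ[K] (n • b') := by
          rw [hm.tmul_mul_tmul_of_mul_eq hR0 ha ha hk.symm, ← hn,
            hm.one_tmul_mul_tmul hR0 ha', map_smul, map_smul, hσ.map_one, smul_mul_assoc,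
            smul_mul_assoc, one_mul, smul_tmul]
      _ = (c • a) ⊗ₜ[K] (n • b') := by
          rw [smul_eq_smul_of_left_alternative hAl hk.symm hc.symm]
      _ = m (a ⊗ₜ[K] b) (m (a ⊗ₜ[K] b) (a' ⊗ₜ[K] b')) := by
          rw [hm.tmul_mul_tmul_of_mul_eq hR0 ha ha' hc.symm, hm.tmul_mul_one_tmul hR1 ha,
            smul_mul_assoc, hσ.mul_apply_mul_self_eq_smul hr hn.symm, smul_tmul, smul_comm]
  · calc m (a ⊗ₜ[K] b) (m (a' ⊗ₜ[K] b') (a' ⊗ₜ[K] b')) = (k' • a) ⊗ₜ[K] (n' • b) := by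
          rw [hm.tmul_mul_tmul_of_mul_eq hR0 ha' ha' hk'.symm, ← hn',
            hm.tmul_mul_one_tmul hR1 ha, smul_mul_assoc, smul_mul_assoc, one_mul, smul_tmul]
      _ = (c • a') ⊗ₜ[K] (n' • b) := by
          rw [smul_eq_smul_of_right_alternative hAr hk'.symm hc.symm]
      _ = m (m (a ⊗ₜ[K] b) (a' ⊗ₜ[K] b')) (a' ⊗ₜ[K] b') := by
          rw [hm.tmul_mul_tmul_of_mul_eq hR0 ha ha' hc.symm, hm.one_tmul_mul_tmul hR0 ha',
            map_smul, hσ.map_mul, hσ.involutive, smul_mul_assoc,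
            hσ.mul_apply_mul_self_eq_smul hr hn'.symm, smul_tmul, smul_comm]

end IsAltMul

theorem TensorProduct.exists_tmul_eq_tmul_of_mem_span_singleton {R M N : Type*}
    [CommSemiring R] [AddCommMonoid M] [Module R M] [AddCommMonoid N] [Module R N] {x a : M}
    (ha : a ∈ span R {x}) (b : N) : ∃ b₁ : N, a ⊗ₜ[R] b = x ⊗ₜ[R] b₁ := by
  obtain ⟨k, rfl⟩ := mem_span_singleton.mp ha
  exact ⟨k • b, smul_tmul k x b⟩

theorem stmt13_general (K A B : Type*) [Field K]
    [NonAssocRing A] [Module K A] [SMulCommClass K A A] [IsScalarTower K A A]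
    [NonAssocRing B] [Module K B] [SMulCommClass K B B] [IsScalarTower K B B]
    (A₀ : Submodule K A)
    (h00 : ∀ x ∈ A₀, ∀ y ∈ A₀, x * y ∈ Submodule.span K {(1 : A)})
    (hAaltl : ∀ x y : A, x * x * y = x * (x * y))
    (hAaltr : ∀ x y : A, x * (y * y) = x * y * y)
    (hBaltl : ∀ x y : B, x * x * y = x * (x * y))
    (hBaltr : ∀ x y : B, x * (y * y) = x * y * y)
    (σ : B →ₗ[K] B) (hσmul : ∀ x y : B, σ (x * y) = σ y * σ x)
    (hσone : σ 1 = 1) (hσinv : ∀ x : B, σ (σ x) = x)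
    (hσtr : ∀ b : B, b + σ b ∈ Submodule.span K {(1 : B)})
    (hσnr : ∀ b : B, b * σ b ∈ Submodule.span K {(1 : B)})
    (R : B ⊗[K] A →ₗ[K] A ⊗[K] B)
    (hR1 : ∀ b : B, R (b ⊗ₜ[K] (1 : A)) = (1 : A) ⊗ₜ[K] b)
    (hR0 : ∀ a ∈ A₀, ∀ b : B, R (b ⊗ₜ[K] a) = a ⊗ₜ[K] σ b)
    (m : A ⊗[K] B →ₗ[K] A ⊗[K] B →ₗ[K] A ⊗[K] B) (hm : IsAltMul K A B A₀ R m) :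
    ∀ a a' : A, (a ∈ A₀ ∨ a ∈ Submodule.span K {(1 : A)}) →
      (a' ∈ A₀ ∨ a' ∈ Submodule.span K {(1 : A)}) →
      ∀ b b' : B,
        m (m (a ⊗ₜ[K] b) (a ⊗ₜ[K] b)) (a' ⊗ₜ[K] b') =
          m (a ⊗ₜ[K] b) (m (a ⊗ₜ[K] b) (a' ⊗ₜ[K] b')) ∧
        m (a ⊗ₜ[K] b) (m (a' ⊗ₜ[K] b') (a' ⊗ₜ[K] b')) =
          m (m (a ⊗ₜ[K] b) (a' ⊗ₜ[K] b')) (a' ⊗ₜ[K] b') := by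
  have hσ : IsStrongInvolution σ := ⟨hσmul, hσone, hσinv, hσtr, hσnr⟩
  intro a a' ha ha' b b'
  rcases ha with ha | ha <;> rcases ha' with ha' | ha'
  · exact hm.alternativeLaws_tmul_tmul hR1 hR0 hσ hBaltr h00 hAaltl hAaltr ha ha' b b'
  · obtain ⟨b₁', hb'⟩ := exists_tmul_eq_tmul_of_mem_span_singleton ha' b'
    rw [hb']
    exact hm.alternativeLaws_tmul_one_tmul hR1 hR0 hσ hBaltl hBaltr h00 ha b b₁'
  · obtain ⟨b₁, hb⟩ := exists_tmul_eq_tmul_of_mem_span_singleton ha b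
    rw [hb]
    exact hm.alternativeLaws_one_tmul_tmul hR1 hR0 hσ hBaltl h00 ha' b₁ b'
  · obtain ⟨b₁, hb⟩ := exists_tmul_eq_tmul_of_mem_span_singleton ha b
    obtain ⟨b₁', hb'⟩ := exists_tmul_eq_tmul_of_mem_span_singleton ha' b'
    rw [hb, hb']
    exact hm.alternativeLaws_one_tmul_one_tmul hR1 hBaltl hBaltr b₁ b₁'

/-- if `A₀·A₀ ⊆ K·1_A`, `A` and `B` are alternative, `σ` is a strong
involution of `B` and `R` is the alternative twisting map `R(b⊗1) = 1⊗b`,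
`R(b⊗a) = a⊗σ(b)` (`a ∈ A₀`), then in `A ⊗̄_R B` the left and right alternative laws
hold for tensor monomials `a⊗b`, `a'⊗b'` with `a, a'` homogeneous. -/
theorem stmt13 (K A B : Type*) [Field K]
    [NonAssocRing A] [Module K A] [SMulCommClass K A A] [IsScalarTower K A A]
    [NonAssocRing B] [Module K B] [SMulCommClass K B B] [IsScalarTower K B B]
    (A₀ : Submodule K A) (hdec : IsCompl (Submodule.span K {(1 : A)}) A₀)
    (h00 : ∀ x ∈ A₀, ∀ y ∈ A₀, x * y ∈ Submodule.span K {(1 : A)})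
    (hAaltl : ∀ x y : A, x * x * y = x * (x * y))
    (hAaltr : ∀ x y : A, x * (y * y) = x * y * y)
    (hBaltl : ∀ x y : B, x * x * y = x * (x * y))
    (hBaltr : ∀ x y : B, x * (y * y) = x * y * y)
    (σ : B →ₗ[K] B) (hσmul : ∀ x y : B, σ (x * y) = σ y * σ x)
    (hσone : σ 1 = 1) (hσinv : ∀ x : B, σ (σ x) = x)
    (hσtr : ∀ b : B, b + σ b ∈ Submodule.span K {(1 : B)})
    (hσnr : ∀ b : B, b * σ b ∈ Submodule.span K {(1 : B)})
    (R : B ⊗[K] A →ₗ[K] A ⊗[K] B)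
    (hR1 : ∀ b : B, R (b ⊗ₜ[K] (1 : A)) = (1 : A) ⊗ₜ[K] b)
    (hR0 : ∀ a ∈ A₀, ∀ b : B, R (b ⊗ₜ[K] a) = a ⊗ₜ[K] σ b)
    (m : A ⊗[K] B →ₗ[K] A ⊗[K] B →ₗ[K] A ⊗[K] B) (hm : IsAltMul K A B A₀ R m) :
    ∀ a a' : A, (a ∈ A₀ ∨ a ∈ Submodule.span K {(1 : A)}) →
      (a' ∈ A₀ ∨ a' ∈ Submodule.span K {(1 : A)}) →
      ∀ b b' : B,
        m (m (a ⊗ₜ[K] b) (a ⊗ₜ[K] b)) (a' ⊗ₜ[K] b') =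
          m (a ⊗ₜ[K] b) (m (a ⊗ₜ[K] b) (a' ⊗ₜ[K] b')) ∧
        m (a ⊗ₜ[K] b) (m (a' ⊗ₜ[K] b') (a' ⊗ₜ[K] b')) =
          m (m (a ⊗ₜ[K] b) (a' ⊗ₜ[K] b')) (a' ⊗ₜ[K] b') :=
  stmt13_general K A B A₀ h00 hAaltl hAaltr hBaltl hBaltr σ hσmul hσone hσinv hσtr hσnr R hR1 hR0 m
    hm
end

section
/- Let B be a unital K-algebra with a strong involution σ (trace t, norm n) and q,r∈K nonzero. Then the map σ̄ : B̄(q,r) → B̄(q,r), σ̄(a+vb+zc) := σ(a) − vb − zc, is a strong involution of the algebra B̄(q,r); moreover the trace and norm of x = a+vb+zc ∈ B̄(q,r) are given by t(x) = t(a) and n(x) = n(a) − q n(b) − r n(c). -/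
/-- The multiplication of the tripling `B̄(q,r)`, on `B ⊕ B ⊕ B` with
`a + vb + zc ↔ (a, b, c)`:
`(a+vb+zc)(a'+vb'+zc') = (aa' + q b'σ(b) + r c'σ(c)) + v(σ(a)b' + a'b) + z(σ(a)c' + a'c)`. -/
def tMul (K B : Type*) [Field K] [NonAssocRing B] [Module K B]
    (σ : B →ₗ[K] B) (q r : K) : B × B × B → B × B × B → B × B × B :=
  fun x y =>
    (x.1 * y.1 + q • (y.2.1 * σ x.2.1) + r • (y.2.2 * σ x.2.2),
     σ x.1 * y.2.1 + y.1 * x.2.1,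
     σ x.1 * y.2.2 + y.1 * x.2.2)

/-- The lifted involution `σ̄` on `B̄(q,r)`: `σ̄(a+vb+zc) = σ(a) − vb − zc`. -/
def tInv (K B : Type*) [Field K] [NonAssocRing B] [Module K B]
    (σ : B →ₗ[K] B) : B × B × B → B × B × B :=
  fun x => (σ x.1, -x.2.1, -x.2.2)

/-!
Everything is a componentwise computation. In the `B`-component of `σ̄(xy) = σ̄(y)σ̄(x)` the
cross terms match because `σ(b'σ(b)) = bσ(b')` and the two sign flips of `σ̄` cancel; in the
`v`- and `z`-components it is `σ(σ a) = a`. Since `σ̄` negates `b` and `c`, the products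
`q b σ(b)` and `r c σ(c)` enter `x σ̄(x)` with a minus sign, giving `n(a) − q n(b) − r n(c)`.
-/

section Tripling

variable {K B : Type*} [Field K] [NonAssocRing B] [Module K B] (σ : B →ₗ[K] B)

theorem tInv_tMul (hσmul : ∀ x y : B, σ (x * y) = σ y * σ x) (hσinv : ∀ x : B, σ (σ x) = x)
    (q r : K) (x y : B × B × B) :
    tInv K B σ (tMul K B σ q r x y) = tMul K B σ q r (tInv K B σ y) (tInv K B σ x) := by
  simp only [tMul, tInv, Prod.mk.injEq, map_add, map_smul, hσmul, hσinv, map_neg, mul_neg,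
    neg_mul, neg_neg]
  exact ⟨trivial, neg_add_rev _ _, neg_add_rev _ _⟩

theorem tInv_tInv (hσinv : ∀ x : B, σ (σ x) = x) (x : B × B × B) :
    tInv K B σ (tInv K B σ x) = x := by
  simp [tInv, hσinv]

theorem tInv_one (hσone : σ 1 = 1) :
    tInv K B σ ((1 : B), (0 : B), (0 : B)) = ((1 : B), (0 : B), (0 : B)) := by
  simp [tInv, hσone]

theorem add_tInv_eq_smul_one (t : B → K) (ht : ∀ b : B, b + σ b = t b • (1 : B))
    (x : B × B × B) : x + tInv K B σ x = t x.1 • ((1 : B), (0 : B), (0 : B)) := by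
  simp [tInv, Prod.ext_iff, ← ht x.1]

theorem tMul_tInv_self (n : B → K) (hn : ∀ b : B, b * σ b = n b • (1 : B)) (q r : K)
    (x : B × B × B) :
    tMul K B σ q r x (tInv K B σ x) =
      (n x.1 - q * n x.2.1 - r * n x.2.2) • ((1 : B), (0 : B), (0 : B)) := by
  simp only [tMul, tInv, neg_mul, mul_neg, Prod.ext_iff, Prod.smul_mk, smul_zero]
  refine ⟨?_, by simp, by simp⟩
  simp only [hn, smul_neg, smul_smul, sub_smul]
  abel

end Tripling

theorem stmt16_general (K B : Type*) [Field K]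
    [NonAssocRing B] [Module K B]
    (σ : B →ₗ[K] B) (hσmul : ∀ x y : B, σ (x * y) = σ y * σ x)
    (hσone : σ 1 = 1) (hσinv : ∀ x : B, σ (σ x) = x)
    (t n : B → K)
    (ht : ∀ b : B, b + σ b = t b • (1 : B))
    (hn : ∀ b : B, b * σ b = n b • (1 : B))
    (q r : K) :
    (∀ x y : B × B × B,
        tInv K B σ (tMul K B σ q r x y) = tMul K B σ q r (tInv K B σ y) (tInv K B σ x)) ∧
    (∀ x : B × B × B, tInv K B σ (tInv K B σ x) = x) ∧
    tInv K B σ ((1 : B), (0 : B), (0 : B)) = ((1 : B), (0 : B), (0 : B)) ∧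
    (∀ x : B × B × B, x + tInv K B σ x = t x.1 • ((1 : B), (0 : B), (0 : B))) ∧
    (∀ x : B × B × B,
        tMul K B σ q r x (tInv K B σ x) =
          (n x.1 - q * n x.2.1 - r * n x.2.2) • ((1 : B), (0 : B), (0 : B))) :=
  ⟨tInv_tMul σ hσmul hσinv q r, tInv_tInv σ hσinv, tInv_one σ hσone,
    add_tInv_eq_smul_one σ t ht, tMul_tInv_self σ n hn q r⟩

/-- `σ̄(a+vb+zc) = σ(a) − vb − zc` is a strong involution of `B̄(q,r)`,
with trace `t(a+vb+zc) = t(a)` and norm `n(a+vb+zc) = n(a) − q n(b) − r n(c)`. -/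
theorem stmt16 (K B : Type*) [Field K]
    [NonAssocRing B] [Module K B] [SMulCommClass K B B] [IsScalarTower K B B]
    (σ : B →ₗ[K] B) (hσmul : ∀ x y : B, σ (x * y) = σ y * σ x)
    (hσone : σ 1 = 1) (hσinv : ∀ x : B, σ (σ x) = x)
    (t n : B → K)
    (ht : ∀ b : B, b + σ b = t b • (1 : B))
    (hn : ∀ b : B, b * σ b = n b • (1 : B))
    (hn' : ∀ b : B, σ b * b = n b • (1 : B))
    (q r : K) (hq : q ≠ 0) (hr : r ≠ 0) :
    (∀ x y : B × B × B,
        tInv K B σ (tMul K B σ q r x y) = tMul K B σ q r (tInv K B σ y) (tInv K B σ x)) ∧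
    (∀ x : B × B × B, tInv K B σ (tInv K B σ x) = x) ∧
    tInv K B σ ((1 : B), (0 : B), (0 : B)) = ((1 : B), (0 : B), (0 : B)) ∧
    (∀ x : B × B × B, x + tInv K B σ x = t x.1 • ((1 : B), (0 : B), (0 : B))) ∧
    (∀ x : B × B × B,
        tMul K B σ q r x (tInv K B σ x) =
          (n x.1 - q * n x.2.1 - r * n x.2.2) • ((1 : B), (0 : B), (0 : B))) :=
  stmt16_general K B σ hσmul hσone hσinv t n ht hn q r
end
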